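/- Let (K, δ) be a differential field of characteristic p > 0 such that K is separably closed as a field. If (L, δ) is a differential field extension of K in which every finite tuple is constrained over K, then L = K. Conversely, if K has this property (no proper constrained extension), then K is separably closed. -/

import Mathlib

set_option synthInstance.maxHeartbeats 1000000
set_option maxHeartbeats 1000000

noncomputable section

open MvPolynomial

universe u

variable {K : Type u} [Field K]

/-- Evaluation of a differential polynomial in `m` differential variables (variable
`(i, j)` standing for `δʲ xᵢ`) at a tuple `β` of a differential field extension. -/
def devalT {L : Type u} [Field L] [Algebra K L] (δL : Derivation ℤ L L) {m : ℕ}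
    (β : Fin m → L) (f : MvPolynomial (Fin m × ℕ) K) : L :=
  aeval (fun q : Fin m × ℕ => (⇑δL)^[q.2] (β q.1)) f

/-- The defining differential ideal `I_δ(β/K)` of a tuple `β`. -/
def IdeltaT {L : Type u} [Field L] [Algebra K L] (δL : Derivation ℤ L L) {m : ℕ}
    (β : Fin m → L) : Ideal (MvPolynomial (Fin m × ℕ) K) :=
  RingHom.ker ((aeval (fun q : Fin m × ℕ => (⇑δL)^[q.2] (β q.1)) :
    MvPolynomial (Fin m × ℕ) K →ₐ[K] L) : MvPolynomial (Fin m × ℕ) K →+* L)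

/-- The differential subfield `K⟨β⟩` of `L` generated by a tuple `β` over `K`. -/
def dgen {L : Type u} [Field L] [Algebra K L] (δL : Derivation ℤ L L) {m : ℕ}
    (β : Fin m → L) : Subfield L :=
  Subfield.closure
    (Set.range (algebraMap K L) ∪ Set.range fun q : Fin m × ℕ => (⇑δL)^[q.2] (β q.1))

/-- `K⟨β⟩/K` is a separable field extension (characteristic `p`): every
`K^p`-linearly independent family in `K` remains linearly independent over `K⟨β⟩^p`. -/
def sepTuple (p : ℕ) [Fact p.Prime] [CharP K p] {L : Type u} [Field L] [CharP L p]
    [Algebra K L] (δL : Derivation ℤ L L) {m : ℕ} (β : Fin m → L) : Prop :=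
  ∀ (n : ℕ) (v : Fin n → K),
    LinearIndependent ((frobenius K p).fieldRange) v →
    LinearIndependent ((dgen (K := K) δL β).map (frobenius L p))
      (fun i => algebraMap K L (v i))

/-- A tuple `α` from a differential extension `(L, δL)` is constrained over `(K, δ)`:
`K⟨α⟩/K` is separable and there is `g` with `g(α) ≠ 0` such that every differential
specialisation `β` of `α` (in any differential field extension of `K`) with `K⟨β⟩/K`
separable and `g(β) ≠ 0` is a generic specialisation, i.e. has the same defining
differential ideal. -/
def Constrained (p : ℕ) [Fact p.Prime] [CharP K p] (δ : Derivation ℤ K K)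
    {L : Type u} [Field L] [CharP L p] [Algebra K L] (δL : Derivation ℤ L L)
    {m : ℕ} (α : Fin m → L) : Prop :=
  sepTuple (K := K) p δL α ∧
  ∃ g : MvPolynomial (Fin m × ℕ) K, devalT δL α g ≠ 0 ∧
    ∀ (M : Type u) [Field M] [CharP M p] [Algebra K M] (δM : Derivation ℤ M M),
      (∀ a : K, δM (algebraMap K M a) = algebraMap K M (δ a)) →
      ∀ β : Fin m → M,
        IdeltaT (K := K) δL α ≤ IdeltaT (K := K) δM β →
        sepTuple (K := K) p δM β → devalT δM β g ≠ 0 →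
        IdeltaT (K := K) δM β = IdeltaT (K := K) δL α

/-!
If `K` is separably closed and every tuple of `L` is constrained over `K`, then `L/K` is
algebraic: for transcendental `a`, the constant `a ^ p` specialises to a constant `b ^ p ∈ K`
avoiding any given `g`, and that specialisation, lying in the separable extension `K/K`, would
have to be generic, forcing `a ^ p ∈ K`. Being algebraic over a separably closed field, `L/K` is
purely inseparable, and separability of `K⟨a⟩/K` pulls `a ^ p ∈ K` back down to `a ∈ K`.

Conversely, if `f` is irreducible and separable over `K`, the derivation of `K` extends to
`K[X]/(f)`, a separable algebraic extension in which every defining ideal is maximal, so every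
tuple is constrained with `g = 1`. If `K` has no proper constrained extension, `f` has a root.
-/

theorem IsSepClosed.infinite [IsSepClosed K] : Infinite K := by
  by_contra h
  have : Finite K := not_infinite_iff_finite.mp h
  exact h inferInstance

theorem Derivation.map_pow_char {R A : Type*} [CommSemiring R] [CommSemiring A] [Algebra R A]
    (p : ℕ) [CharP A p] (D : Derivation R A A) (a : A) : D (a ^ p) = 0 := by
  rw [Derivation.leibniz_pow, nsmul_eq_mul, CharP.cast_eq_zero, zero_mul]

theorem LinearIndependent.of_subfield_le {L ι : Type*} [Field L] {S T : Subfield L} (hST : S ≤ T)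
    {v : ι → L} (hv : LinearIndependent T v) : LinearIndependent S v := by
  rw [linearIndependent_iff'] at hv ⊢
  intro s c hc i hi
  exact Subtype.ext (congrArg Subtype.val (hv s (fun i => ⟨c i, hST (c i).2⟩) hc i hi) :)

theorem Subfield.linearIndependent_one_pair {F : Type*} [Field F] (S : Subfield F) {k : F}
    (hk : k ∉ S) : LinearIndependent S ![1, k] := by
  refine LinearIndependent.pair_iff.mpr fun s t hst => ?_
  rw [Subfield.smul_def, Subfield.smul_def, smul_eq_mul, smul_eq_mul, mul_one] at hst
  by_cases ht : t = 0
  · subst ht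
    simpa using hst
  refine absurd ?_ hk
  have ht' : (t : F) ≠ 0 := fun h => ht (Subtype.ext h)
  have hks : k = ((-(s / t) : S) : F) := by
    push_cast
    field_simp
    linear_combination hst
  exact hks ▸ SetLike.coe_mem _

theorem Module.Basis.mapPowExpCharPowOfIsSeparable_repr_pow {L ι : Type*} [Field L]
    [Algebra K L] (p : ℕ) [ExpChar K p] [ExpChar L p] [Algebra.IsSeparable K L]
    (b : Module.Basis ι K L) (x : L) :
    (b.mapPowExpCharPowOfIsSeparable p 1).repr (x ^ p) =
      (b.repr x).mapRange (· ^ p) (zero_pow (expChar_pos K p).ne') := by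
  rw [← (b.mapPowExpCharPowOfIsSeparable p 1).repr_linearCombination
    ((b.repr x).mapRange (· ^ p) _)]
  congr 1
  conv_lhs => rw [← b.linearCombination_repr x]
  rw [Finsupp.linearCombination_apply, Finsupp.linearCombination_apply,
    Finsupp.sum_mapRange_index (by simp), Finsupp.sum, Finsupp.sum, sum_pow_char]
  refine Finset.sum_congr rfl fun j _ => ?_
  simp [Module.Basis.mapPowExpCharPowOfIsSeparable, Algebra.smul_def, mul_pow]

/-- `K` and `L ^ p` are linearly disjoint over `K ^ p`: the coordinates in a basis `b` of `L/K`
of the `p`-th roots of the coefficients become coordinates in the basis `b ^ p`. -/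
theorem LinearIndependent.algebraMap_of_isSeparable {L ι : Type*} [Field L] [Algebra K L]
    (p : ℕ) [ExpChar K p] [ExpChar L p] [Algebra.IsSeparable K L] {v : ι → K}
    (hv : LinearIndependent (frobenius K p).fieldRange v) :
    LinearIndependent (frobenius L p).fieldRange (algebraMap K L ∘ v) := by
  let b := Module.Basis.ofVectorSpace K L
  rw [linearIndependent_iff'] at hv ⊢
  intro s c hc i hi
  choose y hy using fun i => (c i).2
  have hsum : ∑ i ∈ s, v i • y i ^ p = 0 := by
    rw [← hc]
    refine Finset.sum_congr rfl fun i _ => ?_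
    rw [Subfield.smul_def, ← hy i, frobenius_def, smul_eq_mul, Algebra.smul_def, mul_comm]
    rfl
  have hcoord : ∀ j, ∑ i ∈ s,
      (⟨b.repr (y i) j ^ p, _, rfl⟩ : (frobenius K p).fieldRange) • v i = 0 := fun j => by
    simpa [b.mapPowExpCharPowOfIsSeparable_repr_pow p, Subfield.smul_def, mul_comm] using
      congrArg (fun z => (b.mapPowExpCharPowOfIsSeparable p 1).repr z j) hsum
  have hy0 : y i = 0 := b.repr.map_eq_zero_iff.mp <| Finsupp.ext fun j =>
    (pow_eq_zero_iff (expChar_pos K p).ne').mp (congrArg Subtype.val (hv s _ (hcoord j) i hi))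
  exact Subtype.ext (by rw [← hy i, hy0, map_zero]; rfl)

theorem AdjoinRoot.isSeparable {f : Polynomial K} [Fact (Irreducible f)] (hf : f.Separable) :
    Algebra.IsSeparable K (AdjoinRoot f) := by
  rw [← IntermediateField.isSeparable_top, ← IntermediateField.adjoin_root_eq_top,
    IntermediateField.isSeparable_adjoin_simple_iff_isSeparable]
  exact hf.of_dvd (minpoly.dvd K _ (AdjoinRoot.aeval_eq f ▸ AdjoinRoot.mk_self))

theorem AlgHom.isMaximal_ker_of_isAlgebraic {R L : Type*} [CommRing R] [Algebra K R] [Field L]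
    [Algebra K L] [Algebra.IsAlgebraic K L] (φ : R →ₐ[K] L) : (RingHom.ker φ).IsMaximal := by
  let _ := (Subalgebra.isField_of_algebraic φ.range).toField
  rw [← φ.ker_rangeRestrict]
  exact RingHom.ker_isMaximal_of_surjective _ φ.rangeRestrict_surjective

namespace AdjoinRoot

open Differential

variable {A : Type*} [CommRing A] [Differential A] {f : Polynomial A}

theorem mk_implicitDeriv_eq_zero {w : Polynomial A} (hw : ∃ u, u * f + w * f.derivative = 1)
    {x : Polynomial A} (hx : mk f x = 0) : mk f (implicitDeriv (-mapCoeffs f * w) x) = 0 := by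
  obtain ⟨u, hu⟩ := hw
  obtain ⟨q, rfl⟩ := mk_eq_zero.mp hx
  have hf : f ∣ implicitDeriv (-mapCoeffs f * w) f := ⟨mapCoeffs f * u, by
    simp only [implicitDeriv, Derivation.add_apply, Derivation.smul_apply,
      Derivation.restrictScalars_apply, Polynomial.derivative'_apply, smul_eq_mul]
    linear_combination -mapCoeffs f * hu⟩
  rw [mk_eq_zero, Derivation.leibniz, smul_eq_mul, smul_eq_mul]
  exact dvd_add (dvd_mul_right _ _) (dvd_mul_of_dvd_right hf _)

/-- The root goes to `-(f^δ)(root) * w(root)`, where `f^δ` applies the derivation to the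
coefficients of `f` and `w` inverts `f'` modulo `f`: differentiating `f(root) = 0` forces this. -/
def liftDerivation (hf : f.Separable) : Derivation ℤ (AdjoinRoot f) (AdjoinRoot f) :=
  Derivation.liftOfSurjective (f := (mkₐ f).restrictScalars ℤ) mk_surjective
    (d := implicitDeriv (-mapCoeffs f * hf.choose_spec.choose))
    fun _ => mk_implicitDeriv_eq_zero ⟨_, hf.choose_spec.choose_spec⟩

theorem liftDerivation_algebraMap (hf : f.Separable) (a : A) :
    liftDerivation hf (algebraMap A (AdjoinRoot f) a) = algebraMap A (AdjoinRoot f) a′ :=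
  (Derivation.liftOfSurjective_apply (f := (mkₐ f).restrictScalars ℤ) mk_surjective
    (fun _ => mk_implicitDeriv_eq_zero ⟨_, hf.choose_spec.choose_spec⟩) (Polynomial.C a)).trans
    (congrArg (mk f) (implicitDeriv_C _ a))

end AdjoinRoot

theorem mem_IdeltaT {L : Type u} [Field L] [Algebra K L] (δL : Derivation ℤ L L) {m : ℕ}
    (β : Fin m → L) (f : MvPolynomial (Fin m × ℕ) K) :
    f ∈ IdeltaT (K := K) δL β ↔ devalT δL β f = 0 :=
  RingHom.mem_ker

theorem sepTuple_of_isSeparable (p : ℕ) [Fact p.Prime] [CharP K p] {L : Type u} [Field L]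
    [CharP L p] [Algebra K L] [Algebra.IsSeparable K L] (δL : Derivation ℤ L L) {m : ℕ}
    (β : Fin m → L) : sepTuple (K := K) p δL β := fun _ _ hv =>
  LinearIndependent.of_subfield_le (by rintro _ ⟨x, -, rfl⟩; exact ⟨x, rfl⟩)
    (hv.algebraMap_of_isSeparable (L := L) p)

theorem constrained_of_isSeparable (p : ℕ) [Fact p.Prime] [CharP K p] (δ : Derivation ℤ K K)
    {L : Type u} [Field L] [CharP L p] [Algebra K L] [Algebra.IsSeparable K L]
    (δL : Derivation ℤ L L) {m : ℕ} (α : Fin m → L) : Constrained p δ δL α := by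
  refine ⟨sepTuple_of_isSeparable p δL α, 1, by simp [devalT],
    fun M _ _ _ δM _ β hle _ _ => ?_⟩
  have hmax : (IdeltaT (K := K) δL α).IsMaximal := AlgHom.isMaximal_ker_of_isAlgebraic _
  exact (hmax.eq_of_le (RingHom.ker_ne_top _) hle).symm

def dropDerivatives : MvPolynomial (Fin 1 × ℕ) K →ₐ[K] Polynomial K :=
  aeval fun q => if q.2 = 0 then Polynomial.X else 0

theorem devalT_eq_aeval_dropDerivatives {L : Type u} [Field L] [Algebra K L]
    (δL : Derivation ℤ L L) {x : L} (hx : δL x = 0) (f : MvPolynomial (Fin 1 × ℕ) K) :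
    devalT δL ![x] f = Polynomial.aeval x (dropDerivatives f) := by
  have : (aeval (R := K) fun q : Fin 1 × ℕ => (⇑δL)^[q.2] (![x] q.1)) =
      (Polynomial.aeval x).comp dropDerivatives := by
    refine algHom_ext fun ⟨i, j⟩ => ?_
    rcases j with _ | j
    · simp [dropDerivatives]
    · simp [dropDerivatives, hx, iterate_map_zero]
  exact DFunLike.congr_fun this f

theorem not_constrained_of_transcendental (p : ℕ) [Fact p.Prime] [CharP K p] [Infinite K]
    (δ : Derivation ℤ K K) {L : Type u} [Field L] [CharP L p] [Algebra K L]
    (δL : Derivation ℤ L L) {c : L} (hc : Transcendental K c) (hδc : δL c = 0) :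
    ¬ Constrained p δ δL ![c] := by
  rintro ⟨-, g, hgc, hgeneric⟩
  rw [devalT_eq_aeval_dropDerivatives δL hδc] at hgc
  obtain ⟨d, hd⟩ : ∃ d : K, (Polynomial.expand K p (dropDerivatives g)).eval d ≠ 0 := by
    by_contra! h
    refine hgc ?_
    rw [(Polynomial.expand_eq_zero (Fact.out : p.Prime).pos).mp
      (Polynomial.zero_of_eval_zero _ h), map_zero]
  rw [Polynomial.expand_eval] at hd
  have hδb : δ (d ^ p) = 0 := δ.map_pow_char p d
  have hspec : IdeltaT (K := K) δL ![c] ≤ IdeltaT δ ![d ^ p] := fun f hf => by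
    rw [mem_IdeltaT, devalT_eq_aeval_dropDerivatives δL hδc] at hf
    rw [mem_IdeltaT, devalT_eq_aeval_dropDerivatives δ hδb,
      transcendental_iff.mp hc _ hf, map_zero]
  have hgeneric := hgeneric K δ (fun _ => rfl) ![d ^ p] hspec (sepTuple_of_isSeparable p δ _)
    (by rwa [devalT_eq_aeval_dropDerivatives δ hδb, Polynomial.coe_aeval_eq_eval])
  have hlin : X (0, 0) - C (d ^ p) ∈ IdeltaT δ ![d ^ p] := by
    simp [mem_IdeltaT, devalT]
  rw [hgeneric, mem_IdeltaT] at hlin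
  simp only [devalT, Matrix.cons_val_fin_one, map_sub, aeval_X, Function.iterate_zero, id_eq,
    algHom_C, sub_eq_zero] at hlin
  exact hc (hlin ▸ isAlgebraic_algebraMap _)

theorem mem_range_of_pow_mem_range (p : ℕ) [Fact p.Prime] [CharP K p] {L : Type u} [Field L]
    [CharP L p] [Algebra K L] (δL : Derivation ℤ L L) {a : L}
    (hsep : sepTuple (K := K) p δL ![a]) (ha : a ^ p ∈ (algebraMap K L).range) :
    a ∈ (algebraMap K L).range := by
  obtain ⟨k, hk⟩ := ha
  by_cases hkp : k ∈ (frobenius K p).fieldRange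
  · obtain ⟨t, rfl⟩ := hkp
    refine ⟨t, frobenius_inj L p ?_⟩
    rw [frobenius_def, frobenius_def, ← map_pow, ← hk, frobenius_def]
  have hindep := hsep 2 ![1, k] (Subfield.linearIndependent_one_pair _ hkp)
  have hvec : (fun i => algebraMap K L (![1, k] i)) = ![1, a ^ p] := by
    ext i; fin_cases i <;> simp [hk]
  rw [hvec, LinearIndependent.pair_iff] at hindep
  have hap : a ^ p ∈ (dgen (K := K) δL ![a]).map (frobenius L p) :=
    ⟨a, Subfield.subset_closure (Or.inr ⟨(0, 0), rfl⟩), rfl⟩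
  exact absurd (hindep ⟨a ^ p, hap⟩ (-1) (by simp [Subfield.smul_def])).2
    (neg_ne_zero.mpr one_ne_zero)

theorem surjective_algebraMap_of_constrained (p : ℕ) [Fact p.Prime] [CharP K p] [IsSepClosed K]
    (δ : Derivation ℤ K K) {L : Type u} [Field L] [CharP L p] [Algebra K L]
    (δL : Derivation ℤ L L) (hcon : ∀ a : L, Constrained p δ δL ![a]) :
    Function.Surjective (algebraMap K L) := by
  have := IsSepClosed.infinite (K := K)
  have : Algebra.IsAlgebraic K L := ⟨fun a => by
    by_contra ha
    exact not_constrained_of_transcendental p δ δL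
      (Transcendental.pow ha (Fact.out : p.Prime).pos) (δL.map_pow_char p a) (hcon _)⟩
  intro a
  obtain ⟨n, hn⟩ := IsPurelyInseparable.pow_mem K p a
  induction n generalizing a with
  | zero => simpa using hn
  | succ n ih =>
    exact mem_range_of_pow_mem_range p δL (hcon a).1 (ih _ (by rwa [← pow_mul, ← pow_succ']))

theorem stmt13 (p : ℕ) [Fact p.Prime] [CharP K p] (δ : Derivation ℤ K K) :
    IsSepClosed K ↔
      ∀ (L : Type u) [Field L] [CharP L p] [Algebra K L] (δL : Derivation ℤ L L),
        (∀ a : K, δL (algebraMap K L a) = algebraMap K L (δ a)) →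
        (∀ (m : ℕ) (α : Fin m → L), Constrained p δ δL α) →
        Function.Surjective (algebraMap K L) := by
  constructor
  · intro _ L _ _ _ δL _ hcon
    exact surjective_algebraMap_of_constrained p δ δL (hcon 1 ![·])
  · intro H
    refine IsSepClosed.of_exists_root K fun f _ hirr hsep => ?_
    have := Fact.mk hirr
    have := AdjoinRoot.isSeparable hsep
    have : CharP (AdjoinRoot f) p := charP_of_injective_algebraMap (algebraMap K _).injective p
    let _ : Differential K := ⟨δ⟩
    obtain ⟨k, hk⟩ := H (AdjoinRoot f) (AdjoinRoot.liftDerivation hsep)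
      (AdjoinRoot.liftDerivation_algebraMap hsep) (fun _ => constrained_of_isSeparable p δ _)
      (AdjoinRoot.root f)
    refine ⟨k, (algebraMap K (AdjoinRoot f)).injective ?_⟩
    rw [← Polynomial.aeval_algebraMap_apply_eq_algebraMap_eval, hk, AdjoinRoot.aeval_eq,
      AdjoinRoot.mk_self, map_zero]
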